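/- Let A be the dihedral Artin group with presentation ⟨a, b | (ab)^k a^e = (ba)^k b^e⟩ encoding the relation aba··· = bab··· with m ≥ 3 alternating letters on each side (m finite). If there exists a constant N such that every element of A is a product of at most N alternating syllables a^{n_1} b^{n_2} ··· , then A/Z(A) would be a product of finitely many cyclic subgroups, contradicting that A/Z(A) is acylindrically hyperbolic. Consequently, the syllabic length function on A is unbounded. -/

import Mathlib

/-- The alternating word `xyxy⋯` of length `m` in the free group on `Bool`,
starting with the generator `x`. -/
def altWord (x : Bool) (m : ℕ) : FreeGroup Bool :=
  ((List.range m).map (fun i => FreeGroup.of (if i % 2 = 0 then x else !x))).prod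

/-- The defining relation `prod(a,b;m) = prod(b,a;m)` of the dihedral Artin group,
with `a = true` and `b = false`. -/
def artinRels (m : ℕ) : Set (FreeGroup Bool) :=
  {altWord true m * (altWord false m)⁻¹}

/-- The dihedral Artin group `⟨a, b | prod(a,b;m) = prod(b,a;m)⟩`. -/
abbrev DihedralArtin (m : ℕ) := PresentedGroup (artinRels m)

/-- The Garside element `Δ` of the dihedral Artin group. -/
def garside (m : ℕ) : DihedralArtin m := PresentedGroup.mk (artinRels m) (altWord true m)

/-- The syllabic length of `g` relative to the generating pair `(a, b)`:
the least number of syllables (nonzero powers of `a` or of `b`) whose product is `g`. -/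
noncomputable def sylLen {A : Type*} [Group A] (a b : A) (g : A) : ℕ :=
  sInf {n | ∃ L : List A, L.length = n ∧
    (∀ x ∈ L, (∃ k : ℤ, x = a ^ k) ∨ (∃ k : ℤ, x = b ^ k)) ∧ L.prod = g}

/-!
Let `ω = -ζ` with `ζ` a primitive `m`-th root of unity. Since `∑_{i<m} (-ω)^i = 0`, sending `a`
and `b` to the affine maps `z ↦ ω z` and `z ↦ ω z + 1` respects the Artin relation. Both images
have finite order (the second is conjugate to the first by a translation), so a product of at
most `N` syllables has one of finitely many images. But `a b⁻¹` maps to the translation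
`z ↦ z - 1`, so the powers of `a b⁻¹` have infinitely many images.
-/

open Finset Equiv Pointwise

namespace Set

variable {M : Type*} [Monoid M] {s : Set M}

lemma list_prod_mem_pow {L : List M} (h : ∀ x ∈ L, x ∈ s) : L.prod ∈ s ^ L.length := by
  induction L with
  | nil => simp
  | cons x L ih =>
    rw [List.prod_cons, List.length_cons, pow_succ']
    exact mul_mem_mul (h x List.mem_cons_self) (ih fun y hy => h y (List.mem_cons_of_mem x hy))

lemma Finite.pow (hs : s.Finite) : ∀ n : ℕ, (s ^ n).Finite
  | 0 => by simp
  | n + 1 => by rw [pow_succ]; exact (hs.pow n).mul hs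

end Set

section SyllabicLength

variable {A : Type*} [Group A] {a b : A}

def IsSyllable (a b x : A) : Prop := (∃ k : ℤ, x = a ^ k) ∨ (∃ k : ℤ, x = b ^ k)

lemma exists_length_eq_sylLen {g : A} {L : List A} (hL : ∀ x ∈ L, IsSyllable a b x)
    (hg : L.prod = g) :
    ∃ L' : List A, L'.length = sylLen a b g ∧
      (∀ x ∈ L', IsSyllable a b x) ∧ L'.prod = g := by
  have hne : {n | ∃ L' : List A, L'.length = n ∧
      (∀ x ∈ L', IsSyllable a b x) ∧ L'.prod = g}.Nonempty :=
    ⟨L.length, L, rfl, hL, hg⟩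
  exact Nat.sInf_mem hne

lemma exists_length_eq_sylLen_mul_inv_pow (j : ℕ) :
    ∃ L : List A, L.length = sylLen a b ((a * b⁻¹) ^ j) ∧
      (∀ x ∈ L, IsSyllable a b x) ∧ L.prod = (a * b⁻¹) ^ j := by
  refine exists_length_eq_sylLen (L := (List.replicate j [a, b⁻¹]).flatten) ?_ ?_
  · intro x hx
    simp only [List.mem_flatten, List.mem_replicate] at hx
    obtain ⟨_, ⟨-, rfl⟩, hx⟩ := hx
    rcases List.mem_pair.mp hx with rfl | rfl
    · exact .inl ⟨1, (zpow_one _).symm⟩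
    · exact .inr ⟨-1, (zpow_neg_one _).symm⟩
  · simp [List.prod_flatten]

/-- Products of boundedly many syllables have only finitely many images under `φ`, while the
powers of `a * b⁻¹` have infinitely many. -/
theorem exists_lt_sylLen_of_monoidHom {H : Type*} [Group H] (φ : A →* H)
    (ha : IsOfFinOrder (φ a)) (hb : IsOfFinOrder (φ b)) (hab : ¬IsOfFinOrder (φ (a * b⁻¹)))
    (N : ℕ) : ∃ g : A, N < sylLen a b g := by
  by_contra! hN
  set S : Set H := (Subgroup.zpowers (φ a) : Set H) ∪ Subgroup.zpowers (φ b)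
  have hS : S.Finite := ha.finite_zpowers.union hb.finite_zpowers
  have hrange : Set.range (fun j : ℕ => φ (a * b⁻¹) ^ j) ⊆ S ^ N := by
    rintro _ ⟨j, rfl⟩
    obtain ⟨L, hlen, hL, hprod⟩ := exists_length_eq_sylLen_mul_inv_pow (a := a) (b := b) j
    have hmem : ∀ y ∈ L.map φ, y ∈ S := by
      simp only [List.mem_map, forall_exists_index, and_imp, forall_apply_eq_imp_iff₂]
      intro x hx
      rcases hL x hx with ⟨k, rfl⟩ | ⟨k, rfl⟩
      · exact .inl (map_zpow φ a k ▸ Subgroup.zpow_mem_zpowers _ k)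
      · exact .inr (map_zpow φ b k ▸ Subgroup.zpow_mem_zpowers _ k)
    dsimp only
    rw [← map_pow, ← hprod, map_list_prod]
    refine Set.pow_subset_pow_right (.inl (Subgroup.one_mem _)) ?_ (Set.list_prod_mem_pow hmem)
    simpa [hlen] using hN _
  exact Set.infinite_range_of_injective (injective_pow_iff_not_isOfFinOrder.2 hab)
    ((hS.pow N).subset hrange)

end SyllabicLength

lemma altWord_succ (x : Bool) (n : ℕ) :
    altWord x (n + 1) = FreeGroup.of x * altWord (!x) n := by
  simp only [altWord, List.range_succ_eq_map, List.map_cons, List.map_map, List.prod_cons]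
  congr 3
  funext i
  rcases Nat.mod_two_eq_zero_or_one i with hi | hi <;> simp [Nat.succ_mod_two_eq_zero_iff, hi]

namespace DihedralArtin

variable {m : ℕ} {G : Type*} [Group G]

def lift (f : Bool → G)
    (h : FreeGroup.lift f (altWord true m) = FreeGroup.lift f (altWord false m)) :
    DihedralArtin m →* G :=
  PresentedGroup.toGroup (f := f) (by rintro _ rfl; rw [map_mul, map_inv, h, mul_inv_cancel])

@[simp]
lemma lift_of (f : Bool → G)
    (h : FreeGroup.lift f (altWord true m) = FreeGroup.lift f (altWord false m)) (x : Bool) :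
    lift f h (PresentedGroup.of x) = f x :=
  PresentedGroup.toGroup.of _

end DihedralArtin

lemma not_isOfFinOrder_addRight_one {R : Type*} [AddGroupWithOne R] [CharZero R] :
    ¬IsOfFinOrder (Equiv.addRight (1 : R)) := by
  rw [isOfFinOrder_iff_pow_eq_one]
  rintro ⟨n, hn, h⟩
  have h0 := congrArg (· (0 : R)) h
  simp only [Equiv.nsmul_addRight, coe_addRight, zero_add, nsmul_one, Perm.coe_one, id_eq,
    Nat.cast_eq_zero] at h0
  omega

section AffineGenerators

variable {K : Type*} [Field K] (ω : Kˣ)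

/-- The rotations by `ω` about `0` and about `(1 - ω)⁻¹`. -/
def affineGenerators : Bool → Perm K
  | true => MulAction.toPerm ω
  | false => Equiv.addRight 1 * MulAction.toPerm ω

@[simp] lemma affineGenerators_true_apply (z : K) : affineGenerators ω true z = ω * z := rfl

@[simp] lemma affineGenerators_false_apply (z : K) :
    affineGenerators ω false z = ω * z + 1 := rfl

lemma lift_affineGenerators_altWord_sub (n : ℕ) (z : K) :
    FreeGroup.lift (affineGenerators ω) (altWord true n) z
      - FreeGroup.lift (affineGenerators ω) (altWord false n) z
      = -∑ i ∈ range n, (-(ω : K)) ^ i := by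
  induction n with
  | zero => simp [altWord]
  | succ n ih =>
    simp only [altWord_succ, map_mul, FreeGroup.lift_apply_of, Perm.mul_apply,
      affineGenerators_true_apply, affineGenerators_false_apply, Bool.not_true, Bool.not_false]
    rw [geom_sum_succ]
    linear_combination (-(ω : K)) * ih

lemma lift_affineGenerators_altWord_eq {m : ℕ} (h : ∑ i ∈ range m, (-(ω : K)) ^ i = 0) :
    FreeGroup.lift (affineGenerators ω) (altWord true m)
      = FreeGroup.lift (affineGenerators ω) (altWord false m) :=
  Equiv.ext fun z => sub_eq_zero.mp (by rw [lift_affineGenerators_altWord_sub, h, neg_zero])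

lemma isOfFinOrder_affineGenerators_true (h : IsOfFinOrder ω) :
    IsOfFinOrder (affineGenerators ω true) :=
  (MulAction.toPermHom Kˣ K).isOfFinOrder h

lemma isConj_affineGenerators (h : ω ≠ 1) :
    IsConj (affineGenerators ω true) (affineGenerators ω false) := by
  have h' : (1 : K) - ω ≠ 0 := sub_ne_zero.mpr fun h1 => h (Units.val_eq_one.mp h1.symm)
  refine isConj_iff.mpr ⟨Equiv.addRight (1 - ω)⁻¹, Equiv.ext fun z => ?_⟩
  simp only [Perm.mul_apply, Perm.inv_def, Equiv.addRight_symm, coe_addRight,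
    affineGenerators_true_apply, affineGenerators_false_apply]
  field_simp
  ring

lemma affineGenerators_true_mul_inv_false :
    affineGenerators ω true * (affineGenerators ω false)⁻¹ = (Equiv.addRight 1)⁻¹ := by
  simp only [affineGenerators, mul_inv_rev, mul_inv_cancel_left]

end AffineGenerators

theorem DihedralArtin.exists_monoidHom_perm_of_isPrimitiveRoot {K : Type*} [Field K] [CharZero K]
    {m : ℕ} {ζ : K} (hζ : IsPrimitiveRoot ζ m) (hm : 3 ≤ m) :
    ∃ φ : DihedralArtin m →* Perm K, IsOfFinOrder (φ (PresentedGroup.of true)) ∧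
      IsOfFinOrder (φ (PresentedGroup.of false)) ∧
      ¬IsOfFinOrder (φ (PresentedGroup.of true * (PresentedGroup.of false)⁻¹)) := by
  have hζ0 : ζ ≠ 0 := hζ.ne_zero (by omega)
  set ω : Kˣ := Units.mk0 (-ζ) (neg_ne_zero.mpr hζ0)
  have hsum : ∑ i ∈ range m, (-(ω : K)) ^ i = 0 := by
    simpa [ω] using hζ.geom_sum_eq_zero (by omega)
  have hω : IsOfFinOrder ω := by
    refine isOfFinOrder_iff_pow_eq_one.mpr ⟨2 * m, by omega, Units.ext ?_⟩
    rw [Units.val_pow_eq_pow_val, Units.val_mk0, (even_two_mul m).neg_pow, pow_mul',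
      hζ.pow_eq_one, one_pow, Units.val_one]
  have hω1 : ω ≠ 1 := by
    intro h
    have hζ' : ζ = -1 := by simpa [ω, neg_eq_iff_eq_neg] using congrArg Units.val h
    have hm2 : m ≤ 2 := Nat.le_of_dvd two_pos (hζ.dvd_of_pow_eq_one 2 (by simp [hζ']))
    omega
  refine ⟨DihedralArtin.lift _ (lift_affineGenerators_altWord_eq ω hsum), ?_, ?_, ?_⟩
  · simpa using isOfFinOrder_affineGenerators_true ω hω
  · simpa using (isConj_affineGenerators ω hω1).isOfFinOrder
      (isOfFinOrder_affineGenerators_true ω hω)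
  · rw [map_mul, map_inv, DihedralArtin.lift_of, DihedralArtin.lift_of,
      affineGenerators_true_mul_inv_false, isOfFinOrder_inv_iff]
    exact not_isOfFinOrder_addRight_one

/-- in a dihedral Artin group with coefficient `m ≥ 3`,
the syllabic length function is unbounded: `A` is not a bounded product of
alternating cyclic subgroups. -/
theorem stmt2 (m : ℕ) (hm : 3 ≤ m) :
    ∀ N : ℕ, ∃ g : DihedralArtin m,
      N < sylLen (PresentedGroup.of true) (PresentedGroup.of false) g := by
  obtain ⟨φ, ha, hb, hab⟩ := DihedralArtin.exists_monoidHom_perm_of_isPrimitiveRoot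
    (Complex.isPrimitiveRoot_exp m (by omega)) hm
  exact exists_lt_sylLen_of_monoidHom φ ha hb hab
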